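/- The center of SL(2, F5) has order 2, and the quotient of SL(2, F5) by its center is isomorphic to the alternating group A5. -/
import Mathlib

set_option maxRecDepth 40000
set_option maxHeartbeats 4000000

namespace SL25A5

abbrev G := Matrix.SpecialLinearGroup (Fin 2) (ZMod 5)

instance instDecG : DecidableEq G := fun a b =>
  decidable_of_iff (a.1 0 0 = b.1 0 0 ∧ a.1 0 1 = b.1 0 1 ∧ a.1 1 0 = b.1 1 0 ∧ a.1 1 1 = b.1 1 1)
    (by constructor
        · rintro ⟨h1, h2, h3, h4⟩
          ext i j
          fin_cases i <;> fin_cases j <;> assumption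
        · rintro rfl; exact ⟨rfl, rfl, rfl, rfl⟩)

def w : G := ⟨!![4,0;0,4], by decide⟩
def s : G := ⟨!![1,1;0,1], by decide⟩
def t : G := ⟨!![1,0;1,1], by decide⟩

def Hlist : List G := [⟨!![0,1;4,0], by decide⟩, ⟨!![0,2;2,0], by decide⟩, ⟨!![0,3;3,0], by decide⟩, ⟨!![0,4;1,0], by decide⟩, ⟨!![1,0;0,1], by decide⟩, ⟨!![1,1;2,3], by decide⟩, ⟨!![1,2;1,3], by decide⟩, ⟨!![1,3;4,3], by decide⟩, ⟨!![1,4;3,3], by decide⟩, ⟨!![2,0;0,3], by decide⟩, ⟨!![2,1;2,4], by decide⟩, ⟨!![2,2;1,4], by decide⟩, ⟨!![2,3;4,4], by decide⟩, ⟨!![2,4;3,4], by decide⟩, ⟨!![3,0;0,2], by decide⟩, ⟨!![3,1;2,1], by decide⟩, ⟨!![3,2;1,1], by decide⟩, ⟨!![3,3;4,1], by decide⟩, ⟨!![3,4;3,1], by decide⟩, ⟨!![4,0;0,4], by decide⟩, ⟨!![4,1;2,2], by decide⟩, ⟨!![4,2;1,2], by decide⟩, ⟨!![4,3;4,2], by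 decide⟩, ⟨!![4,4;3,2], by decide⟩]

theorem hmulH : ∀ a ∈ Hlist, ∀ b ∈ Hlist, a * b ∈ Hlist := by decide
theorem hinvH' : ∀ a ∈ Hlist, ∃ b ∈ Hlist, a * b = 1 := by decide

def Hs : Subgroup G where
  carrier := {x | x ∈ Hlist}
  one_mem' := by decide
  mul_mem' := fun {a b} ha hb => hmulH a ha b hb
  inv_mem' := fun {a} ha => by
    obtain ⟨b, hb, hab⟩ := hinvH' a ha
    have : a⁻¹ = b := inv_eq_of_mul_eq_one_right hab
    rw [this]; exact hb

instance : DecidablePred (· ∈ Hs) := fun x => decidable_of_iff (x ∈ Hlist) Iff.rfl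

def Cs : Subgroup G where
  carrier := {x | x = 1 ∨ x = w}
  one_mem' := Or.inl rfl
  mul_mem' := by
    rintro a b (rfl | rfl) (rfl | rfl)
    · exact Or.inl (one_mul 1)
    · exact Or.inr (one_mul w)
    · exact Or.inr (mul_one w)
    · exact Or.inl (by decide)
  inv_mem' := by
    rintro a (rfl | rfl)
    · exact Or.inl inv_one
    · exact Or.inr (by decide)

instance : DecidablePred (· ∈ Cs) := fun x =>
  decidable_of_iff (x = 1 ∨ x = w) Iff.rfl

theorem hwcent : ∀ b : G, b * w = w * b := by decide

theorem hcent : Subgroup.center G = Cs := by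
  have key : ∀ g : G, s * g = g * s → t * g = g * t → (g = 1 ∨ g = w) := by decide
  ext g
  constructor
  · intro hg
    exact key g (Subgroup.mem_center_iff.mp hg s) (Subgroup.mem_center_iff.mp hg t)
  · rintro (rfl | rfl)
    · exact Subgroup.one_mem _
    · exact Subgroup.mem_center_iff.mpr fun b => hwcent b

theorem hcardCs : Nat.card Cs = 2 := by
  rw [Nat.card_eq_fintype_card]; decide

def x1 : G := ⟨!![0,1;4,1], by decide⟩
def x2 : G := ⟨!![0,1;4,2], by decide⟩
def y1 : G := ⟨!![1,4;1,0], by decide⟩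
def y2 : G := ⟨!![2,4;1,0], by decide⟩

theorem hy1 : x1⁻¹ = y1 := by decide
theorem hy2 : x2⁻¹ = y2 := by decide

theorem hcore : Hs.normalCore = Cs := by
  have key2 : ∀ g ∈ Hlist, x1 * g * y1 ∈ Hlist → x2 * g * y2 ∈ Hlist → g = 1 ∨ g = w := by decide
  have hwH : w ∈ Hlist := by decide
  apply le_antisymm
  · intro g hg
    have hmem : ∀ b : G, b * g * b⁻¹ ∈ Hs := hg
    have h1 := hmem x1
    have h2 := hmem x2
    rw [hy1] at h1
    rw [hy2] at h2
    exact key2 g (Hs.normalCore_le hg) h1 h2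
  · rintro g (rfl | rfl)
    · exact Subgroup.one_mem _
    · intro b
      have : b * w * b⁻¹ = w := by
        rw [hwcent b, mul_assoc, mul_inv_cancel, mul_one]
      show b * w * b⁻¹ ∈ Hs
      rw [this]; exact hwH

def r : Fin 5 → G :=
  ![⟨!![0,1;4,0], by decide⟩, ⟨!![0,1;4,1], by decide⟩, ⟨!![0,1;4,2], by decide⟩,
    ⟨!![0,1;4,3], by decide⟩, ⟨!![0,1;4,4], by decide⟩]

def rinv : Fin 5 → G :=
  ![⟨!![0,4;1,0], by decide⟩, ⟨!![1,4;1,0], by decide⟩, ⟨!![2,4;1,0], by decide⟩,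
    ⟨!![3,4;1,0], by decide⟩, ⟨!![4,4;1,0], by decide⟩]

theorem hrinv : ∀ i, (r i)⁻¹ = rinv i := by decide

def e' : Fin 5 → G ⧸ Hs := fun i => QuotientGroup.mk (r i)

theorem hinj : Function.Injective e' := by
  have habs : ∀ i j : Fin 5, i ≠ j → rinv i * r j ∉ Hlist := by decide
  intro i j hij
  by_contra hne
  have h := QuotientGroup.eq.mp hij
  rw [hrinv] at h
  exact habs i j hne h

theorem hcardG : Nat.card G = 120 := by
  rw [Nat.card_eq_fintype_card]; decide

theorem hcardHs : Nat.card Hs = 24 := by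
  rw [Nat.card_eq_fintype_card]; decide

theorem hcardQ : Nat.card (G ⧸ Hs) = 5 := by
  have h := Subgroup.card_eq_card_quotient_mul_card_subgroup (s := Hs)
  rw [hcardG, hcardHs] at h
  omega

noncomputable def e : (G ⧸ Hs) ≃ Fin 5 :=
  (Equiv.ofBijective e' ((Nat.bijective_iff_injective_and_card e').mpr
    ⟨hinj, by rw [hcardQ, Nat.card_eq_fintype_card, Fintype.card_fin]⟩)).symm

/-- `permCongr` as a `MulEquiv`. -/
def permME {α β : Type*} (e : α ≃ β) : Equiv.Perm α ≃* Equiv.Perm β :=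
  { e.permCongr with
    map_mul' := fun p q => by
      ext x
      simp [Equiv.permCongr] }

noncomputable def φ : G →* Equiv.Perm (Fin 5) :=
  (permME e).toMonoidHom.comp (MulAction.toPermHom G (G ⧸ Hs))

theorem hkerφ : φ.ker = Cs := by
  have h1 : (MulAction.toPermHom G (G ⧸ Hs)).ker = Cs := by
    rw [← Subgroup.normalCore_eq_ker, hcore]
  rw [← h1]
  ext g
  simp only [φ, MonoidHom.mem_ker, MonoidHom.comp_apply, MulEquiv.coe_toMonoidHom,
    EmbeddingLike.map_eq_one_iff]

theorem hcardRange : Nat.card φ.range = 60 := by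
  have h := Subgroup.card_eq_card_quotient_mul_card_subgroup (s := φ.ker)
  rw [hcardG, hkerφ, hcardCs] at h
  have h2 : Nat.card (G ⧸ φ.ker) = 60 := by rw [hkerφ]; omega
  rw [← Nat.card_congr (QuotientGroup.quotientKerEquivRange φ).toEquiv, h2]

theorem hcardPerm : Nat.card (Equiv.Perm (Fin 5)) = 120 := by
  rw [Nat.card_eq_fintype_card, Fintype.card_perm, Fintype.card_fin]
  norm_num [Nat.factorial]

theorem hidx : φ.range.index = 2 := by
  have h := Subgroup.card_mul_index φ.range
  rw [hcardRange, hcardPerm] at h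
  omega

theorem hA5le : alternatingGroup (Fin 5) ≤ φ.range := by
  rw [← Equiv.Perm.closure_three_cycles_eq_alternating]
  refine Subgroup.closure_le _ |>.mpr fun σ hσ => ?_
  have h3 : σ ^ 3 = 1 := by
    rw [← Equiv.Perm.IsThreeCycle.orderOf hσ]
    exact pow_orderOf_eq_one σ
  have hsq : (σ * σ) * (σ * σ) ∈ φ.range :=
    Subgroup.mul_self_mem_of_index_two hidx (σ * σ)
  have hfour : σ ^ 4 = σ := by
    calc σ ^ 4 = σ ^ 3 * σ := by rw [pow_succ]
    _ = σ := by rw [h3, one_mul]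
  have heq : (σ * σ) * (σ * σ) = σ := by
    rw [show σ * σ = σ ^ 2 from (sq σ).symm, ← pow_add, show 2 + 2 = 4 from rfl]
    exact hfour
  rwa [heq] at hsq

theorem hcardA5 : Nat.card (alternatingGroup (Fin 5)) = 60 := by
  have h := two_mul_card_alternatingGroup (α := Fin 5)
  rw [Fintype.card_perm, Fintype.card_fin, show Nat.factorial 5 = 120 from rfl] at h
  rw [Nat.card_eq_fintype_card]
  omega

theorem hrange : φ.range = alternatingGroup (Fin 5) := by
  refine (Subgroup.eq_of_le_of_card_ge hA5le ?_).symm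
  rw [hcardRange, hcardA5]

noncomputable def ψ : G →* alternatingGroup (Fin 5) :=
  φ.codRestrict _ (fun g => hrange ▸ MonoidHom.mem_range.mpr ⟨g, rfl⟩)

theorem hsurjψ : Function.Surjective ψ := by
  intro b
  have hb : (b : Equiv.Perm (Fin 5)) ∈ φ.range := hrange.symm ▸ b.2
  obtain ⟨g, hg⟩ := hb
  exact ⟨g, Subtype.ext hg⟩

theorem hkerψ : ψ.ker = Subgroup.center G := by
  rw [ψ, MonoidHom.ker_codRestrict, hkerφ, hcent]

end SL25A5

/-- The center of `SL(2, F5)` has order 2 and the central quotient is isomorphic to `A5`. -/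
theorem stmt_9 :
    Nat.card (Subgroup.center (Matrix.SpecialLinearGroup (Fin 2) (ZMod 5))) = 2 ∧
    Nonempty ((Matrix.SpecialLinearGroup (Fin 2) (ZMod 5) ⧸
        Subgroup.center (Matrix.SpecialLinearGroup (Fin 2) (ZMod 5))) ≃*
      alternatingGroup (Fin 5)) := by
  constructor
  · rw [SL25A5.hcent]; exact SL25A5.hcardCs
  · have q := QuotientGroup.quotientKerEquivOfSurjective SL25A5.ψ SL25A5.hsurjψ
    exact ⟨(QuotientGroup.quotientMulEquivOfEq SL25A5.hkerψ.symm).trans q⟩
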